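/- arXiv:1312.2452 — 10 statements merged into one kernel-verified Lean document; each statement's English description precedes it below -/
import Mathlib

section
/- Let o, a₁, a₂, a₃, a₄ ∈ ℝ² with aᵢ ≠ o for all i and det(w(aᵢ), w(aⱼ)) > 0 for all 1 ≤ i < j ≤ 4, and let x ∈ ℝ² ∖ {o} satisfy det(w(a₁), w(x)) ≥ 0 and det(w(x), w(a₂)) ≥ 0 (i.e., x lies on the boundary arc between a₁ and a₂ not containing o). Then: (i) if det(w(a₁), w(x)) > 0, then (a₁,a₂,a₃,a₄)_o ≤ (a₁,x,a₃,a₄)_o, with equality if and only if det(w(x), w(a₂)) = 0; and (ii) if det(w(x), w(a₂)) > 0, then (a₁,a₂,a₃,a₄)_o ≤ (x,a₂,a₃,a₄)_o, with equality if and only if det(w(a₁), w(x)) = 0. -/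
/-- `det2 u v = u₁v₂ − u₂v₁` for `u, v ∈ ℝ²`. -/
noncomputable def det2 (u v : ℝ × ℝ) : ℝ := u.1 * v.2 - u.2 * v.1

/-- The cross ratio `(a₁,a₂,a₃,a₄)_o` of the four lines through `o` and the `aᵢ`,
expressed in an affine chart, where `w(p) = p − o`. -/
noncomputable def crossRatio (o a₁ a₂ a₃ a₄ : ℝ × ℝ) : ℝ :=
  (det2 (a₁ - o) (a₃ - o) * det2 (a₄ - o) (a₂ - o)) /
  (det2 (a₁ - o) (a₂ - o) * det2 (a₄ - o) (a₃ - o))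

/-!
Write `[pq]` for `det2 (p - o) (q - o)`. Moving the second point of the cross ratio from `a₂`
to `x`, the Plücker relation `[a₁a₂][xa₄] = [a₁x][a₂a₄] + [xa₂][a₁a₄]` gives
`(a₁,x,a₃,a₄)_o - (a₁,a₂,a₃,a₄)_o = [xa₂] · [a₁a₃][a₁a₄] / ([a₁x][a₁a₂][a₃a₄])`,
whose sign is that of `[xa₂]`; moving the first point is symmetric.
-/

lemma det2_anticomm (u v : ℝ × ℝ) : det2 v u = -det2 u v := by
  unfold det2; ring

lemma det2_mul_det2 (u v w z : ℝ × ℝ) :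
    det2 u v * det2 w z = det2 u w * det2 v z + det2 w v * det2 u z := by
  unfold det2; ring

section CrossRatio

variable (o a b c d x : ℝ × ℝ)

lemma crossRatio_eq :
    crossRatio o a b c d =
      det2 (a - o) (c - o) * det2 (b - o) (d - o) /
        (det2 (a - o) (b - o) * det2 (c - o) (d - o)) := by
  rw [crossRatio, det2_anticomm (b - o) (d - o), det2_anticomm (c - o) (d - o), mul_neg, mul_neg,
    neg_div_neg_eq]

variable {o a b c d x}

lemma crossRatio_sub_crossRatio_of_second (hax : det2 (a - o) (x - o) ≠ 0)
    (hab : det2 (a - o) (b - o) ≠ 0) (hcd : det2 (c - o) (d - o) ≠ 0) :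
    crossRatio o a x c d - crossRatio o a b c d =
      det2 (x - o) (b - o) * (det2 (a - o) (c - o) * det2 (a - o) (d - o)) /
        (det2 (a - o) (x - o) * det2 (a - o) (b - o) * det2 (c - o) (d - o)) := by
  rw [crossRatio_eq, crossRatio_eq]
  field_simp
  linear_combination det2 (a - o) (c - o) * det2_mul_det2 (a - o) (b - o) (x - o) (d - o)

lemma crossRatio_sub_crossRatio_of_first (hxb : det2 (x - o) (b - o) ≠ 0)
    (hab : det2 (a - o) (b - o) ≠ 0) (hcd : det2 (c - o) (d - o) ≠ 0) :
    crossRatio o x b c d - crossRatio o a b c d =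
      det2 (a - o) (x - o) * (det2 (b - o) (c - o) * det2 (b - o) (d - o)) /
        (det2 (x - o) (b - o) * det2 (a - o) (b - o) * det2 (c - o) (d - o)) := by
  rw [crossRatio_eq, crossRatio_eq]
  field_simp
  linear_combination det2 (b - o) (d - o) * det2_mul_det2 (a - o) (b - o) (x - o) (c - o)

end CrossRatio

lemma le_and_eq_iff_of_sub_eq_mul_div {a b t p q : ℝ} (ht : 0 ≤ t) (hp : 0 < p) (hq : 0 < q)
    (h : b - a = t * p / q) : a ≤ b ∧ (a = b ↔ t = 0) := by
  refine ⟨sub_nonneg.mp (h ▸ by positivity), ?_⟩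
  rw [eq_comm, ← sub_eq_zero, h, div_eq_zero_iff, mul_eq_zero]
  simp only [hp.ne', hq.ne', or_false]

theorem stmt5_general (o a₁ a₂ a₃ a₄ x : ℝ × ℝ)
    (h12 : 0 < det2 (a₁ - o) (a₂ - o)) (h13 : 0 < det2 (a₁ - o) (a₃ - o))
    (h14 : 0 < det2 (a₁ - o) (a₄ - o)) (h23 : 0 < det2 (a₂ - o) (a₃ - o))
    (h24 : 0 < det2 (a₂ - o) (a₄ - o)) (h34 : 0 < det2 (a₃ - o) (a₄ - o))
    (h1x : 0 ≤ det2 (a₁ - o) (x - o)) (hx2 : 0 ≤ det2 (x - o) (a₂ - o)) :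
    (0 < det2 (a₁ - o) (x - o) →
      crossRatio o a₁ a₂ a₃ a₄ ≤ crossRatio o a₁ x a₃ a₄ ∧
      (crossRatio o a₁ a₂ a₃ a₄ = crossRatio o a₁ x a₃ a₄ ↔
        det2 (x - o) (a₂ - o) = 0)) ∧
    (0 < det2 (x - o) (a₂ - o) →
      crossRatio o a₁ a₂ a₃ a₄ ≤ crossRatio o x a₂ a₃ a₄ ∧
      (crossRatio o a₁ a₂ a₃ a₄ = crossRatio o x a₂ a₃ a₄ ↔
        det2 (a₁ - o) (x - o) = 0)) := by
  constructor
  · intro h1x'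
    exact le_and_eq_iff_of_sub_eq_mul_div hx2 (by positivity) (by positivity)
      (crossRatio_sub_crossRatio_of_second h1x'.ne' h12.ne' h34.ne')
  · intro hx2'
    exact le_and_eq_iff_of_sub_eq_mul_div h1x (by positivity) (by positivity)
      (crossRatio_sub_crossRatio_of_first hx2'.ne' h12.ne' h34.ne')

/-- Let `o, a₁, a₂, a₃, a₄ ∈ ℝ²` with `aᵢ ≠ o` and
`det(w(aᵢ), w(aⱼ)) > 0` for `1 ≤ i < j ≤ 4`, and let `x ≠ o` satisfy
`det(w(a₁), w(x)) ≥ 0` and `det(w(x), w(a₂)) ≥ 0` (so `x` lies on the boundary arc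
between `a₁` and `a₂` not containing `o`). Then:
(i) if `det(w(a₁), w(x)) > 0`, then `(a₁,a₂,a₃,a₄)_o ≤ (a₁,x,a₃,a₄)_o`, with equality
iff `det(w(x), w(a₂)) = 0`; and
(ii) if `det(w(x), w(a₂)) > 0`, then `(a₁,a₂,a₃,a₄)_o ≤ (x,a₂,a₃,a₄)_o`, with equality
iff `det(w(a₁), w(x)) = 0`. -/
theorem stmt5 (o a₁ a₂ a₃ a₄ x : ℝ × ℝ)
    (h1 : a₁ ≠ o) (h2 : a₂ ≠ o) (h3 : a₃ ≠ o) (h4 : a₄ ≠ o) (hx : x ≠ o)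
    (h12 : 0 < det2 (a₁ - o) (a₂ - o)) (h13 : 0 < det2 (a₁ - o) (a₃ - o))
    (h14 : 0 < det2 (a₁ - o) (a₄ - o)) (h23 : 0 < det2 (a₂ - o) (a₃ - o))
    (h24 : 0 < det2 (a₂ - o) (a₄ - o)) (h34 : 0 < det2 (a₃ - o) (a₄ - o))
    (h1x : 0 ≤ det2 (a₁ - o) (x - o)) (hx2 : 0 ≤ det2 (x - o) (a₂ - o)) :
    (0 < det2 (a₁ - o) (x - o) →
      crossRatio o a₁ a₂ a₃ a₄ ≤ crossRatio o a₁ x a₃ a₄ ∧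
      (crossRatio o a₁ a₂ a₃ a₄ = crossRatio o a₁ x a₃ a₄ ↔
        det2 (x - o) (a₂ - o) = 0)) ∧
    (0 < det2 (x - o) (a₂ - o) →
      crossRatio o a₁ a₂ a₃ a₄ ≤ crossRatio o x a₂ a₃ a₄ ∧
      (crossRatio o a₁ a₂ a₃ a₄ = crossRatio o x a₂ a₃ a₄ ↔
        det2 (a₁ - o) (x - o) = 0)) :=
  stmt5_general o a₁ a₂ a₃ a₄ x h12 h13 h14 h23 h24 h34 h1x hx2
end

section
/- Let o, a₁, a₂, a₃, a₄ ∈ ℝ² with aᵢ ≠ o for all i and det(w(aᵢ), w(aⱼ)) > 0 for all 1 ≤ i < j ≤ 4, and let y ∈ ℝ² ∖ {o} satisfy det(w(a₃), w(y)) ≥ 0 and det(w(y), w(a₄)) ≥ 0 (i.e., y lies on the boundary arc between a₃ and a₄ not containing o). Then: (i) if det(w(y), w(a₄)) > 0, then (a₁,a₂,a₃,a₄)_o ≤ (a₁,a₂,y,a₄)_o, with equality if and only if det(w(a₃), w(y)) = 0; and (ii) if det(w(a₃), w(y)) > 0, then (a₁,a₂,a₃,a₄)_o ≤ (a₁,a₂,a₃,y)_o,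 with equality if and only if det(w(y), w(a₄)) = 0. -/
lemma crossRatio_sub_crossRatio_third (o a b c d y : ℝ × ℝ)
    (hab : det2 (a - o) (b - o) ≠ 0) (hcd : det2 (c - o) (d - o) ≠ 0)
    (hyd : det2 (y - o) (d - o) ≠ 0) :
    crossRatio o a b y d - crossRatio o a b c d =
      det2 (a - o) (d - o) * det2 (b - o) (d - o) /
        (det2 (a - o) (b - o) * det2 (c - o) (d - o) * det2 (y - o) (d - o)) *
      det2 (c - o) (y - o) := by
  have hdc : det2 (d - o) (c - o) ≠ 0 := by rwa [det2_anticomm, neg_ne_zero]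
  have hdy : det2 (d - o) (y - o) ≠ 0 := by rwa [det2_anticomm, neg_ne_zero]
  unfold crossRatio
  field_simp
  unfold det2
  ring

lemma crossRatio_sub_crossRatio_fourth (o a b c d y : ℝ × ℝ)
    (hab : det2 (a - o) (b - o) ≠ 0) (hcd : det2 (c - o) (d - o) ≠ 0)
    (hcy : det2 (c - o) (y - o) ≠ 0) :
    crossRatio o a b c y - crossRatio o a b c d =
      det2 (a - o) (c - o) * det2 (b - o) (c - o) /
        (det2 (a - o) (b - o) * det2 (c - o) (d - o) * det2 (c - o) (y - o)) *
      det2 (y - o) (d - o) := by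
  have hdc : det2 (d - o) (c - o) ≠ 0 := by rwa [det2_anticomm, neg_ne_zero]
  have hyc : det2 (y - o) (c - o) ≠ 0 := by rwa [det2_anticomm, neg_ne_zero]
  unfold crossRatio
  field_simp
  unfold det2
  ring

lemma le_and_eq_iff_of_sub_eq_mul {u v c t : ℝ} (hc : 0 < c) (ht : 0 ≤ t)
    (h : v - u = c * t) : u ≤ v ∧ (u = v ↔ t = 0) := by
  refine ⟨sub_nonneg.mp (h ▸ mul_nonneg hc.le ht), ?_⟩
  rw [eq_comm, ← sub_eq_zero, h, mul_eq_zero, or_iff_right hc.ne']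

theorem stmt6_general (o a₁ a₂ a₃ a₄ y : ℝ × ℝ)
    (h12 : 0 < det2 (a₁ - o) (a₂ - o)) (h13 : 0 < det2 (a₁ - o) (a₃ - o))
    (h14 : 0 < det2 (a₁ - o) (a₄ - o)) (h23 : 0 < det2 (a₂ - o) (a₃ - o))
    (h24 : 0 < det2 (a₂ - o) (a₄ - o)) (h34 : 0 < det2 (a₃ - o) (a₄ - o))
    (h3y : 0 ≤ det2 (a₃ - o) (y - o)) (hy4 : 0 ≤ det2 (y - o) (a₄ - o)) :
    (0 < det2 (y - o) (a₄ - o) →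
      crossRatio o a₁ a₂ a₃ a₄ ≤ crossRatio o a₁ a₂ y a₄ ∧
      (crossRatio o a₁ a₂ a₃ a₄ = crossRatio o a₁ a₂ y a₄ ↔
        det2 (a₃ - o) (y - o) = 0)) ∧
    (0 < det2 (a₃ - o) (y - o) →
      crossRatio o a₁ a₂ a₃ a₄ ≤ crossRatio o a₁ a₂ a₃ y ∧
      (crossRatio o a₁ a₂ a₃ a₄ = crossRatio o a₁ a₂ a₃ y ↔
        det2 (y - o) (a₄ - o) = 0)) := by
  constructor
  · intro hy4'
    exact le_and_eq_iff_of_sub_eq_mul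
      (div_pos (mul_pos h14 h24) (mul_pos (mul_pos h12 h34) hy4')) h3y
      (crossRatio_sub_crossRatio_third o a₁ a₂ a₃ a₄ y h12.ne' h34.ne' hy4'.ne')
  · intro h3y'
    exact le_and_eq_iff_of_sub_eq_mul
      (div_pos (mul_pos h13 h23) (mul_pos (mul_pos h12 h34) h3y')) hy4
      (crossRatio_sub_crossRatio_fourth o a₁ a₂ a₃ a₄ y h12.ne' h34.ne' h3y'.ne')

/-- Let `o, a₁, a₂, a₃, a₄ ∈ ℝ²` with `aᵢ ≠ o` and
`det(w(aᵢ), w(aⱼ)) > 0` for `1 ≤ i < j ≤ 4`, and let `y ≠ o` satisfy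
`det(w(a₃), w(y)) ≥ 0` and `det(w(y), w(a₄)) ≥ 0` (so `y` lies on the boundary arc
between `a₃` and `a₄` not containing `o`). Then:
(i) if `det(w(y), w(a₄)) > 0`, then `(a₁,a₂,a₃,a₄)_o ≤ (a₁,a₂,y,a₄)_o`, with equality
iff `det(w(a₃), w(y)) = 0`; and
(ii) if `det(w(a₃), w(y)) > 0`, then `(a₁,a₂,a₃,a₄)_o ≤ (a₁,a₂,a₃,y)_o`, with equality
iff `det(w(y), w(a₄)) = 0`. -/
theorem stmt6 (o a₁ a₂ a₃ a₄ y : ℝ × ℝ)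
    (h1 : a₁ ≠ o) (h2 : a₂ ≠ o) (h3 : a₃ ≠ o) (h4 : a₄ ≠ o) (hy : y ≠ o)
    (h12 : 0 < det2 (a₁ - o) (a₂ - o)) (h13 : 0 < det2 (a₁ - o) (a₃ - o))
    (h14 : 0 < det2 (a₁ - o) (a₄ - o)) (h23 : 0 < det2 (a₂ - o) (a₃ - o))
    (h24 : 0 < det2 (a₂ - o) (a₄ - o)) (h34 : 0 < det2 (a₃ - o) (a₄ - o))
    (h3y : 0 ≤ det2 (a₃ - o) (y - o)) (hy4 : 0 ≤ det2 (y - o) (a₄ - o)) :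
    (0 < det2 (y - o) (a₄ - o) →
      crossRatio o a₁ a₂ a₃ a₄ ≤ crossRatio o a₁ a₂ y a₄ ∧
      (crossRatio o a₁ a₂ a₃ a₄ = crossRatio o a₁ a₂ y a₄ ↔
        det2 (a₃ - o) (y - o) = 0)) ∧
    (0 < det2 (a₃ - o) (y - o) →
      crossRatio o a₁ a₂ a₃ a₄ ≤ crossRatio o a₁ a₂ a₃ y ∧
      (crossRatio o a₁ a₂ a₃ a₄ = crossRatio o a₁ a₂ a₃ y ↔
        det2 (y - o) (a₄ - o) = 0)) :=
  stmt6_general o a₁ a₂ a₃ a₄ y h12 h13 h14 h23 h24 h34 h3y hy4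
end

section
/- Let ρ₁, ρ₂, ρ₃ > 1 and r > 0 be real numbers, with indices read modulo 3 (ρ₀ := ρ₃, ρ₄ := ρ₁), and let i, k ∈ {1, 2, 3}. Set n₁ := ρ_{k−1}·ρ_{i−1}·(ρ_k + r)·(r + ρ_i·ρ_{i+1}) / (r·ρ_{i+1}·(ρ_{k−1} − 1)·(ρ_i − 1)). Then n₁ ≥ ρ_{i−1}, n₁ ≥ 1/(ρ_i − 1), n₁ ≥ ρ_{i−1}·r/(ρ_{i+1}·(ρ_i − 1)), and n₁ ≥ 1/r. -/
/-!
Writing `a = ρ_{k−1}`, `b = ρ_{i−1}`, `c = ρ_k`, `d = ρ_i`, `e = ρ_{i+1}`, the quantity `n₁`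
factors as `b · a/(a−1) · (c+r)/r · (r+de)/(e(d−1))`. The two middle factors are at least `1`,
and `(c+r)/r ≥ 1/r`; the last factor dominates each of `1`, `1/(d−1)` and `r/(e(d−1))` because
its numerator `r + de` exceeds `e(d−1)`, `e` and `r`. Each of the four bounds follows by bounding
all but one factor of the product from below by `1`.
-/

noncomputable def goldmanN₁ (a b c d e r : ℝ) : ℝ :=
  a * b * (c + r) * (r + d * e) / (r * e * (a - 1) * (d - 1))

section GoldmanN₁

variable {a b c d e r : ℝ}

theorem goldmanN₁_eq_mul (ha : 1 < a) (hd : 1 < d) (he : 0 < e) (hr : 0 < r) :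
    goldmanN₁ a b c d e r =
      b * (a / (a - 1)) * ((c + r) / r) * ((r + d * e) / (e * (d - 1))) := by
  have : a - 1 ≠ 0 := by linarith
  have : d - 1 ≠ 0 := by linarith
  unfold goldmanN₁
  field_simp

theorem one_le_div_sub_one (ha : 1 < a) : 1 ≤ a / (a - 1) :=
  (one_le_div (by linarith)).2 (by linarith)

theorem one_le_add_div_self (hc : 0 ≤ c) (hr : 0 < r) : 1 ≤ (c + r) / r :=
  (one_le_div hr).2 (by linarith)

theorem one_div_le_add_div_self (hc : 1 ≤ c) (hr : 0 < r) : 1 / r ≤ (c + r) / r := by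
  gcongr
  linarith

theorem one_le_add_mul_div_mul_sub_one (hd : 1 < d) (he : 0 < e) (hr : 0 ≤ r) :
    1 ≤ (r + d * e) / (e * (d - 1)) :=
  (one_le_div (mul_pos he (by linarith))).2 (by nlinarith)

theorem one_div_sub_one_le_add_mul_div_mul_sub_one (hd : 1 < d) (he : 0 < e) (hr : 0 ≤ r) :
    1 / (d - 1) ≤ (r + d * e) / (e * (d - 1)) := by
  have : d - 1 ≠ 0 := by linarith
  calc 1 / (d - 1) = e / (e * (d - 1)) := by field_simp
    _ ≤ _ := by gcongr; nlinarith

theorem div_mul_sub_one_le_add_mul_div_mul_sub_one (hd : 1 < d) (he : 0 < e) :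
    r / (e * (d - 1)) ≤ (r + d * e) / (e * (d - 1)) := by
  gcongr
  nlinarith

theorem le_goldmanN₁ (ha : 1 < a) (hb : 0 ≤ b) (hc : 0 ≤ c) (hd : 1 < d) (he : 0 < e)
    (hr : 0 < r) : b ≤ goldmanN₁ a b c d e r := by
  have hA := one_le_div_sub_one ha
  have hC := one_le_add_div_self hc hr
  have hD := one_le_add_mul_div_mul_sub_one hd he hr.le
  calc b = b * 1 * 1 * 1 := by ring
    _ ≤ _ := by gcongr
    _ = _ := (goldmanN₁_eq_mul ha hd he hr).symm

theorem one_div_sub_one_le_goldmanN₁ (ha : 1 < a) (hb : 1 ≤ b) (hc : 0 ≤ c) (hd : 1 < d)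
    (he : 0 < e) (hr : 0 < r) : 1 / (d - 1) ≤ goldmanN₁ a b c d e r := by
  have hA := one_le_div_sub_one ha
  have hC := one_le_add_div_self hc hr
  have hD := one_div_sub_one_le_add_mul_div_mul_sub_one hd he hr.le
  have : 0 < d - 1 := by linarith
  calc 1 / (d - 1) = 1 * 1 * 1 * (1 / (d - 1)) := by ring
    _ ≤ _ := by gcongr
    _ = _ := (goldmanN₁_eq_mul ha hd he hr).symm

theorem mul_div_mul_sub_one_le_goldmanN₁ (ha : 1 < a) (hb : 0 ≤ b) (hc : 0 ≤ c) (hd : 1 < d)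
    (he : 0 < e) (hr : 0 < r) : b * r / (e * (d - 1)) ≤ goldmanN₁ a b c d e r := by
  have hA := one_le_div_sub_one ha
  have hC := one_le_add_div_self hc hr
  have hD := div_mul_sub_one_le_add_mul_div_mul_sub_one (r := r) hd he
  have : 0 < e * (d - 1) := mul_pos he (by linarith)
  calc b * r / (e * (d - 1)) = b * 1 * 1 * (r / (e * (d - 1))) := by ring
    _ ≤ _ := by gcongr
    _ = _ := (goldmanN₁_eq_mul ha hd he hr).symm

theorem one_div_le_goldmanN₁ (ha : 1 < a) (hb : 1 ≤ b) (hc : 1 ≤ c) (hd : 1 < d)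
    (he : 0 < e) (hr : 0 < r) : 1 / r ≤ goldmanN₁ a b c d e r := by
  have hA := one_le_div_sub_one ha
  have hC := one_div_le_add_div_self hc hr
  have hD := one_le_add_mul_div_mul_sub_one hd he hr.le
  calc 1 / r = 1 * 1 * (1 / r) * 1 := by ring
    _ ≤ _ := by gcongr
    _ = _ := (goldmanN₁_eq_mul ha hd he hr).symm

end GoldmanN₁

/-- Let `ρ₁, ρ₂, ρ₃ > 1` and `r > 0`, with indices read modulo 3, and let
`i, k ∈ {1,2,3}`. Set
`n₁ = ρ_{k−1}·ρ_{i−1}·(ρ_k + r)·(r + ρ_i·ρ_{i+1}) / (r·ρ_{i+1}·(ρ_{k−1} − 1)·(ρ_i − 1))`.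
Then `n₁ ≥ ρ_{i−1}`, `n₁ ≥ 1/(ρ_i − 1)`, `n₁ ≥ ρ_{i−1}·r/(ρ_{i+1}·(ρ_i − 1))`, and
`n₁ ≥ 1/r`. -/
theorem stmt11 (ρ : Fin 3 → ℝ) (hρ : ∀ i, 1 < ρ i) (r : ℝ) (hr : 0 < r)
    (i k : Fin 3) (n₁ : ℝ)
    (hn₁ : n₁ = ρ (k - 1) * ρ (i - 1) * (ρ k + r) * (r + ρ i * ρ (i + 1)) /
      (r * ρ (i + 1) * (ρ (k - 1) - 1) * (ρ i - 1))) :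
    n₁ ≥ ρ (i - 1) ∧ n₁ ≥ 1 / (ρ i - 1) ∧
    n₁ ≥ ρ (i - 1) * r / (ρ (i + 1) * (ρ i - 1)) ∧ n₁ ≥ 1 / r := by
  subst hn₁
  have ha := hρ (k - 1)
  have hb := (hρ (i - 1)).le
  have hc := (hρ k).le
  have hd := hρ i
  have he : 0 < ρ (i + 1) := by linarith [hρ (i + 1)]
  exact ⟨le_goldmanN₁ ha (by linarith) (by linarith) hd he hr,
    one_div_sub_one_le_goldmanN₁ ha hb (by linarith) hd he hr,
    mul_div_mul_sub_one_le_goldmanN₁ ha (by linarith) (by linarith) hd he hr,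
    one_div_le_goldmanN₁ ha hb hc hd he hr⟩
end

section
/- For every L > 0 there exists K₀ > 0 such that for all K ≥ K₀ the following holds: for every increasing sequence (T_j) of positive reals with T_j → ∞ and every choice of maximizers Q_j as in the setup, the sequence F_j = ⌊(T_j − Q_j·K)/L⌋ tends to ∞ as j → ∞. -/
/-!
Take `K₀ = L`. Replacing a maximizer `Q ≥ 2` by `Q - 1` raises `F = ⌊(T - QK)/L⌋` by at least
one because `K ≥ L`, while `C(F + Q, Q) * Q = C(F + Q, Q - 1) * (F + 1)`; so maximality forces
`Q ≤ F + 1`. Together with `T - QK < (F + 1) L` this gives `T < (F + 1)(K + L)`, hence `F → ∞`.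
-/

open Filter

theorem Nat.le_of_choose_le_choose_succ {f k : ℕ}
    (h : (f + k + 1).choose k ≤ (f + k + 1).choose (k + 1)) : k ≤ f := by
  have hid := Nat.choose_succ_right_eq (f + k + 1) k
  rw [show f + k + 1 - k = f + 1 by omega] at hid
  have hpos : 0 < (f + k + 1).choose k := Nat.choose_pos (by omega)
  have hmul : (f + k + 1).choose k * (k + 1) ≤ (f + k + 1).choose k * (f + 1) :=
    calc _ ≤ (f + k + 1).choose (k + 1) * (k + 1) := Nat.mul_le_mul_right _ h
      _ = _ := hid
  have := Nat.le_of_mul_le_mul_left hmul hpos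
  omega

section FloorLevel

variable {L K T : ℝ}

theorem floor_sub_succ_mul_add_one_le (hL : 0 < L) (hLK : L ≤ K) {m : ℕ}
    (hm : ((m + 1 : ℕ) : ℝ) * K ≤ T) :
    ⌊(T - ((m + 1 : ℕ) : ℝ) * K) / L⌋₊ + 1 ≤ ⌊(T - m * K) / L⌋₊ := by
  have hx : 0 ≤ (T - ((m + 1 : ℕ) : ℝ) * K) / L := div_nonneg (by linarith) hL.le
  rw [← Nat.floor_add_one hx]
  refine Nat.floor_le_floor ?_
  have hshift : (T - ((m + 1 : ℕ) : ℝ) * K) / L + K / L = (T - m * K) / L := by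
    push_cast; ring
  linarith [(one_le_div hL).mpr hLK]

theorem le_floor_sub_mul_add_one_of_maximal (hL : 0 < L) (hLK : L ≤ K) {q : ℕ}
    (hq : q * K ≤ T)
    (hmax : 2 ≤ q → (⌊(T - ((q - 1 : ℕ) : ℝ) * K) / L⌋₊ + (q - 1)).choose (q - 1) ≤
      (⌊(T - q * K) / L⌋₊ + q).choose q) :
    q ≤ ⌊(T - q * K) / L⌋₊ + 1 := by
  obtain _ | _ | k := q
  case zero | succ.zero => omega
  rw [Nat.add_sub_cancel] at hmax
  set f := ⌊(T - ((k + 1 + 1 : ℕ) : ℝ) * K) / L⌋₊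
  have hstep : f + 1 ≤ ⌊(T - ((k + 1 : ℕ) : ℝ) * K) / L⌋₊ :=
    floor_sub_succ_mul_add_one_le hL hLK hq
  have hchoose : (f + (k + 1) + 1).choose (k + 1) ≤ (f + (k + 1) + 1).choose (k + 1 + 1) :=
    calc _ = (f + 1 + (k + 1)).choose (k + 1) := by rw [Nat.add_right_comm]
      _ ≤ _ := Nat.choose_le_choose _ (by omega)
      _ ≤ (f + (k + 1 + 1)).choose (k + 1 + 1) := hmax (by omega)
      _ = _ := by rw [← Nat.add_assoc]
  have hkf := Nat.le_of_choose_le_choose_succ hchoose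
  omega

theorem sub_one_lt_floor_sub_mul_of_maximal (hL : 0 < L) (hLK : L ≤ K) (hT : 0 ≤ T) {q : ℕ}
    (hq : q ≤ ⌊T / K⌋₊)
    (hmax : ∀ m : ℕ, 1 ≤ m → m ≤ ⌊T / K⌋₊ →
      (⌊(T - (m : ℝ) * K) / L⌋₊ + m).choose m ≤ (⌊(T - (q : ℝ) * K) / L⌋₊ + q).choose q) :
    T / (K + L) - 1 < ⌊(T - (q : ℝ) * K) / L⌋₊ := by
  have hK : 0 < K := hL.trans_le hLK
  have hqK : q * K ≤ T :=
    (le_div_iff₀ hK).mp ((Nat.le_floor_iff (div_nonneg hT hK.le)).mp hq)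
  have hqF : (q : ℝ) ≤ ⌊(T - q * K) / L⌋₊ + 1 := by
    exact_mod_cast le_floor_sub_mul_add_one_of_maximal hL hLK hqK
      fun h2 => hmax _ (by omega) (by omega)
  have hTF : T - q * K < (⌊(T - q * K) / L⌋₊ + 1) * L :=
    (div_lt_iff₀ hL).mp (Nat.lt_floor_add_one _)
  rw [sub_lt_iff_lt_add, div_lt_iff₀ (by linarith)]
  nlinarith

end FloorLevel

/-- For every `L > 0` there is `K₀ > 0` such that for all `K ≥ K₀`:
for every increasing sequence `(T_j)` of positive reals with `T_j → ∞` and every choice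
of maximizers `Q_j` (i.e. for each `j` with `⌊T_j/K⌋ ≥ 1`, `Q_j ∈ {1,…,⌊T_j/K⌋}`
maximizes `m ↦ C(⌊(T_j − mK)/L⌋ + m, m)`), the sequence
`F_j = ⌊(T_j − Q_j·K)/L⌋` tends to `∞`. -/
theorem stmt12 (L : ℝ) (hL : 0 < L) :
    ∃ K₀ : ℝ, 0 < K₀ ∧ ∀ K : ℝ, K₀ ≤ K →
    ∀ (T : ℕ → ℝ) (Q : ℕ → ℕ), StrictMono T → (∀ j, 0 < T j) →
    Tendsto T atTop atTop →
    (∀ j, 1 ≤ ⌊T j / K⌋₊ →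
      1 ≤ Q j ∧ Q j ≤ ⌊T j / K⌋₊ ∧
      ∀ m : ℕ, 1 ≤ m → m ≤ ⌊T j / K⌋₊ →
        Nat.choose (⌊(T j - (m : ℝ) * K) / L⌋₊ + m) m ≤
          Nat.choose (⌊(T j - (Q j : ℝ) * K) / L⌋₊ + Q j) (Q j)) →
    Tendsto (fun j => ⌊(T j - (Q j : ℝ) * K) / L⌋₊) atTop atTop := by
  refine ⟨L, hL, fun K hLK T Q _ _ hT hmax => ?_⟩
  have hK : 0 < K := hL.trans_le hLK
  have hlower : Tendsto (fun j => T j / (K + L) - 1) atTop atTop :=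
    tendsto_atTop_add_const_right _ _ (hT.atTop_div_const (by linarith))
  refine tendsto_natCast_atTop_iff.mp (tendsto_atTop_mono' _ ?_ hlower)
  filter_upwards [hT.eventually_ge_atTop K] with j hj
  obtain ⟨-, hQ, hopt⟩ := hmax j (Nat.one_le_floor_iff _ |>.mpr ((one_le_div hK).mpr hj))
  exact (sub_one_lt_floor_sub_mul_of_maximal hL hLK (hK.le.trans hj) hQ hopt).le
end

section
/- For every L > 0 there exists K₀ > 0 such that for all K ≥ K₀ the following holds: for every increasing sequence (T_j) of positive reals with T_j → ∞ and every choice of maximizers Q_j as in the setup, the sequence Q_j tends to ∞ as j → ∞. -/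
/-!
`C(f + m, m)` is a polynomial of degree `m` in `f`, and `f = ⌊(T - mK)/L⌋₊` grows linearly in
`T`. So for each fixed `n`, once `T` is large the term `m = n + 1` (of size `≍ T^(n+1)`) beats
every term with `m ≤ n` (each `O(T^n)`), and it is admissible as soon as `(n + 1) K ≤ T`.
Hence eventually every maximizer exceeds `n`; any `K > 0` works.
-/

open Filter

namespace Nat

theorem choose_add_le_add_one_pow_of_le {f m n : ℕ} (hmn : m ≤ n) :
    (f + m).choose m ≤ (f + 1) ^ n :=
  (choose_add_le_add_one_pow f m).trans (Nat.pow_le_pow_right f.succ_pos hmn)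

theorem add_one_pow_le_factorial_mul_choose (f k : ℕ) :
    (f + 1) ^ k ≤ k ! * (f + k).choose k :=
  ascFactorial_eq_factorial_mul_choose f k ▸ pow_succ_le_ascFactorial (f + 1) k

end Nat

theorem eventually_mul_add_pow_lt_sub_pow_succ (a b d : ℝ) (n : ℕ) :
    ∀ᶠ x in atTop, a * (x + b) ^ n < (x - d) ^ (n + 1) := by
  filter_upwards [eventually_ge_atTop |b|, eventually_ge_atTop (2 * |d|),
    eventually_gt_atTop (2 ^ (2 * n + 1) * |a|), eventually_gt_atTop 0] with x hb hd ha hx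
  have hxb : x + b ≤ 2 * x := by linarith [le_abs_self b]
  have hxd : x / 2 ≤ x - d := by linarith [le_abs_self d]
  have hxb₀ : 0 ≤ x + b := by linarith [neg_abs_le b]
  calc a * (x + b) ^ n
      ≤ |a| * (x + b) ^ n := by gcongr; exact le_abs_self a
    _ ≤ |a| * (2 * x) ^ n := by gcongr
    _ = 2 ^ (2 * n + 1) * |a| * x ^ n / 2 ^ (n + 1) := by
        rw [mul_pow]; field_simp; ring
    _ < x * x ^ n / 2 ^ (n + 1) := by gcongr
    _ = (x / 2) ^ (n + 1) := by rw [div_pow, ← pow_succ']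
    _ ≤ (x - d) ^ (n + 1) := by gcongr

noncomputable def binomWeight (L K T : ℝ) (m : ℕ) : ℕ :=
  (⌊(T - (m : ℝ) * K) / L⌋₊ + m).choose m

section binomWeight

variable {L K T : ℝ}

theorem binomWeight_le_of_le (hL : 0 < L) (hK : 0 ≤ K) (hT : 0 ≤ T) {m n : ℕ} (hmn : m ≤ n) :
    (binomWeight L K T m : ℝ) ≤ (T / L + 1) ^ n := by
  have hfloor : (⌊(T - m * K) / L⌋₊ : ℝ) ≤ T / L := by
    refine (Nat.cast_le.mpr (Nat.floor_le_floor ?_)).trans (Nat.floor_le (by positivity))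
    gcongr
    exact sub_le_self T (by positivity)
  calc (binomWeight L K T m : ℝ) ≤ ((⌊(T - m * K) / L⌋₊ + 1) ^ n : ℕ) :=
        Nat.cast_le.mpr (Nat.choose_add_le_add_one_pow_of_le hmn)
    _ ≤ (T / L + 1) ^ n := by push_cast; gcongr

theorem sub_div_pow_le_factorial_mul_binomWeight (hL : 0 < L) {m : ℕ} (hT : m * K ≤ T) :
    ((T - m * K) / L) ^ m ≤ m.factorial * (binomWeight L K T m : ℝ) := by
  calc ((T - m * K) / L) ^ m ≤ ((⌊(T - m * K) / L⌋₊ + 1 : ℕ) : ℝ) ^ m := by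
        push_cast
        gcongr
        exact (Nat.lt_floor_add_one _).le
    _ ≤ m.factorial * (binomWeight L K T m : ℝ) := by
        exact_mod_cast Nat.add_one_pow_le_factorial_mul_choose _ m

theorem eventually_binomWeight_lt (hL : 0 < L) (hK : 0 ≤ K) (n : ℕ) :
    ∀ᶠ T in atTop, ∀ m ≤ n, binomWeight L K T m < binomWeight L K T (n + 1) := by
  have hpoly := (tendsto_id.atTop_div_const hL).eventually
    (eventually_mul_add_pow_lt_sub_pow_succ ((n + 1).factorial) 1 ((n + 1) * K / L) n)
  filter_upwards [hpoly, eventually_ge_atTop ((n + 1) * K), eventually_ge_atTop 0]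
    with T hpolyT hTn hT m hmn
  have hfac : (0 : ℝ) < (n + 1).factorial := by positivity
  have hlow := sub_div_pow_le_factorial_mul_binomWeight (K := K) hL (m := n + 1)
    (by push_cast; exact hTn)
  rw [← Nat.cast_lt (α := ℝ), ← mul_lt_mul_iff_right₀ hfac]
  calc (n + 1).factorial * (binomWeight L K T m : ℝ)
      ≤ (n + 1).factorial * (T / L + 1) ^ n := by gcongr; exact binomWeight_le_of_le hL hK hT hmn
    _ < (T / L - (n + 1) * K / L) ^ (n + 1) := by simpa using hpolyT
    _ ≤ _ := by rw [← sub_div]; exact_mod_cast hlow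

end binomWeight

/-- In the setup (L > 0, K ≥ K₀, increasing (T_j) of positive reals with
T_j → ∞, maximizers Q_j of m ↦ C(⌊(T_j − mK)/L⌋ + m, m) over {1,…,⌊T_j/K⌋}),
the sequence Q_j tends to ∞. -/
theorem stmt13 (L : ℝ) (hL : 0 < L) :
    ∃ K₀ : ℝ, 0 < K₀ ∧ ∀ K : ℝ, K₀ ≤ K →
    ∀ (T : ℕ → ℝ) (Q : ℕ → ℕ), StrictMono T → (∀ j, 0 < T j) →
    Tendsto T atTop atTop →
    (∀ j, 1 ≤ ⌊T j / K⌋₊ →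
      1 ≤ Q j ∧ Q j ≤ ⌊T j / K⌋₊ ∧
      ∀ m : ℕ, 1 ≤ m → m ≤ ⌊T j / K⌋₊ →
        Nat.choose (⌊(T j - (m : ℝ) * K) / L⌋₊ + m) m ≤
          Nat.choose (⌊(T j - (Q j : ℝ) * K) / L⌋₊ + Q j) (Q j)) →
    Tendsto Q atTop atTop := by
  refine ⟨1, one_pos, fun K hK T Q _ _ hT hQ => tendsto_atTop.mpr fun n => ?_⟩
  have hK_pos : 0 < K := one_pos.trans_le hK
  filter_upwards [hT.eventually (eventually_binomWeight_lt hL hK_pos.le n),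
    hT.eventually_ge_atTop ((n + 1) * K)] with j hlt hTj
  have hadm : n + 1 ≤ ⌊T j / K⌋₊ := Nat.le_floor <| by
    rw [le_div_iff₀ hK_pos]; exact_mod_cast hTj
  obtain ⟨-, -, hmax⟩ := hQ j (n.succ_pos.trans_le hadm)
  by_contra! hQn
  exact (hlt (Q j) hQn.le).not_ge (hmax (n + 1) n.succ_pos hadm)
end

section
/- For every L > 0 there exists K₀ > 0 such that for all K ≥ K₀ the following holds: for every increasing sequence (T_j) of positive reals with T_j → ∞ and every choice of maximizers Q_j as in the setup, one has 0 ≤ liminf_{j→∞} Q_j/F_j ≤ limsup_{j→∞} Q_j/F_j ≤ 1. -/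
/-!
If the maximizer `Q` exceeded `F = ⌊(T - Q K)/L⌋`, replacing `Q` by `Q - 1` would raise the
floor to at least `F + 2` once `K ≥ 2L`, and `C(F + Q, Q) < C(F + 2 + (Q - 1), Q - 1)` as soon as
`1 ≤ F < Q`, contradicting maximality. Hence `0 ≤ Q_j / F_j ≤ 1` for all large `j`.
-/

open Filter

theorem Nat.choose_lt_choose_add_two_pred {f q : ℕ} (hf : 1 ≤ f) (hfq : f ≤ q) :
    (f + (q + 1)).choose (q + 1) < (f + 2 + q).choose q := by
  have hstep : (f + q + 1).choose f ≤ (f + q + 1).choose (f + 1) := by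
    refine Nat.le_of_mul_le_mul_right ?_ (Nat.succ_pos f)
    rw [Nat.choose_succ_right_eq, show f + q + 1 - f = q + 1 by omega]
    exact Nat.mul_le_mul_left _ (by omega)
  have hpos : 0 < (f + q + 1).choose (f + 2) := Nat.choose_pos (by omega)
  calc (f + (q + 1)).choose (q + 1) = (f + q + 1).choose f := by
        rw [← Nat.choose_symm_add, add_assoc]
    _ < (f + q + 1).choose (f + 1) + (f + q + 1).choose (f + 2) := by omega
    _ = (f + 2 + q).choose (f + 2) := by
        rw [← Nat.choose_succ_succ, show (f + q + 1).succ = f + 2 + q by omega]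
    _ = (f + 2 + q).choose q := Nat.choose_symm_add

theorem le_floor_of_choose_pred_le {L K t : ℝ} (hL : 0 < L) (hK : 2 * L ≤ K) {q : ℕ}
    (hF : 1 ≤ ⌊(t - q * K) / L⌋₊)
    (hmax : 2 ≤ q → (⌊(t - ((q - 1 : ℕ) : ℝ) * K) / L⌋₊ + (q - 1)).choose (q - 1) ≤
      (⌊(t - q * K) / L⌋₊ + q).choose q) :
    q ≤ ⌊(t - q * K) / L⌋₊ := by
  set f := ⌊(t - q * K) / L⌋₊
  by_contra! hlt
  obtain ⟨p, rfl⟩ : ∃ p, q = p + 1 := ⟨q - 1, by omega⟩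
  simp only [Nat.add_sub_cancel] at hmax
  have hgap : f + 2 ≤ ⌊(t - p * K) / L⌋₊ := by
    have hx : 0 ≤ (t - (p + 1 : ℕ) * K) / L := zero_le_one.trans (Nat.floor_pos.1 hF)
    have h2 : 2 ≤ K / L := (le_div_iff₀ hL).2 (by linarith)
    rw [← Nat.floor_add_ofNat hx]
    refine Nat.floor_le_floor ?_
    calc (t - (p + 1 : ℕ) * K) / L + 2 ≤ (t - (p + 1 : ℕ) * K) / L + K / L := by gcongr
      _ = (t - p * K) / L := by push_cast; field_simp; ring
  have hgain := Nat.choose_lt_choose_add_two_pred hF (by omega : f ≤ p)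
  have hmono := Nat.choose_le_choose p (Nat.add_le_add_right hgap p)
  exact (hgain.trans_le (hmono.trans (hmax (by omega)))).false

theorem Filter.le_liminf_and_liminf_le_limsup_and_limsup_le {α β : Type*}
    [ConditionallyCompleteLinearOrder β] {f : Filter α} [f.NeBot] {u : α → β} {a b : β}
    (ha : ∀ᶠ n in f, a ≤ u n) (hb : ∀ᶠ n in f, u n ≤ b) :
    a ≤ liminf u f ∧ liminf u f ≤ limsup u f ∧ limsup u f ≤ b :=
  have hle : IsBoundedUnder (· ≤ ·) f u := isBoundedUnder_of_eventually_le hb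
  have hge : IsBoundedUnder (· ≥ ·) f u := isBoundedUnder_of_eventually_ge ha
  ⟨le_liminf_of_le hle.isCoboundedUnder_ge ha, liminf_le_limsup hle hge,
    limsup_le_of_le hge.isCoboundedUnder_le hb⟩

/-- In the setup (L > 0, K ≥ K₀, increasing (T_j) of positive reals with
T_j → ∞, maximizers Q_j, F_j = ⌊(T_j − Q_j K)/L⌋),
0 ≤ liminf Q_j/F_j ≤ limsup Q_j/F_j ≤ 1. -/
theorem stmt14 (L : ℝ) (hL : 0 < L) :
    ∃ K₀ : ℝ, 0 < K₀ ∧ ∀ K : ℝ, K₀ ≤ K →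
    ∀ (T : ℕ → ℝ) (Q : ℕ → ℕ), StrictMono T → (∀ j, 0 < T j) →
    Tendsto T atTop atTop →
    (∀ j, 1 ≤ ⌊T j / K⌋₊ →
      1 ≤ Q j ∧ Q j ≤ ⌊T j / K⌋₊ ∧
      ∀ m : ℕ, 1 ≤ m → m ≤ ⌊T j / K⌋₊ →
        Nat.choose (⌊(T j - (m : ℝ) * K) / L⌋₊ + m) m ≤
          Nat.choose (⌊(T j - (Q j : ℝ) * K) / L⌋₊ + Q j) (Q j)) →
    (0 ≤ Filter.liminf (fun j => (Q j : ℝ) / (⌊(T j - (Q j : ℝ) * K) / L⌋₊ : ℝ)) atTop ∧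
      Filter.liminf (fun j => (Q j : ℝ) / (⌊(T j - (Q j : ℝ) * K) / L⌋₊ : ℝ)) atTop ≤
        Filter.limsup (fun j => (Q j : ℝ) / (⌊(T j - (Q j : ℝ) * K) / L⌋₊ : ℝ)) atTop ∧
      Filter.limsup (fun j => (Q j : ℝ) / (⌊(T j - (Q j : ℝ) * K) / L⌋₊ : ℝ)) atTop ≤ 1) := by
  refine ⟨2 * L, by positivity, fun K hK T Q _ _ hT hmax => ?_⟩
  have hK0 : 0 < K := by linarith
  refine le_liminf_and_liminf_le_limsup_and_limsup_le
    (Eventually.of_forall fun j => by positivity) ?_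
  filter_upwards [hT.eventually_ge_atTop K] with j hj
  obtain ⟨-, hQN, hQmax⟩ :=
    hmax j ((Nat.one_le_floor_iff _).2 ((one_le_div hK0).2 hj))
  rcases Nat.eq_zero_or_pos ⌊(T j - Q j * K) / L⌋₊ with hF | hF
  · simp [hF]
  · refine div_le_one_of_le₀ ?_ (Nat.cast_nonneg _)
    exact_mod_cast le_floor_of_choose_pred_le hL hK hF
      fun hQ2 => hQmax (Q j - 1) (by omega) (by omega)
end

section
/- For every L > 0 there exists K₀ > 0 such that for all K ≥ K₀ the following holds: for every increasing sequence (T_j) of positive reals with T_j → ∞ and every choice of maximizers Q_j as in the setup, there exists α > 0 such that α ≤ liminf_{j→∞} Q_j/T_j, and moreover limsup_{j→∞} Q_j/T_j ≤ 1/(L + K). -/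
/-
Put `F m = ⌊(T - m K) / L⌋`; raising `m` by one lowers `F m` by about `K / L`, and by at least `2`
when `K ≥ 2 L`. Compare consecutive terms of `m ↦ C(F m + m, m)`. If `F m ≤ m + 1`, the index
`m + 1` lies past the middle of the row `F m + m`, so the next term is smaller; as `Q` is a
maximiser this cannot happen at `m = Q - 1`, whence `(Q - 1)(L + K) ≤ T`. If instead
`F (m + 1) ≥ (m + 1) 2^⌈K/L⌉`, lowering the top of the binomial by at most `⌈K/L⌉` costs a factor
at most `2^⌈K/L⌉`, while raising both arguments by one gains the factor
`(F (m + 1) + m + 1) / (m + 1)`, so the next term is larger; this cannot happen at `m = Q`, whence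
`T < (Q + 1)(K + L 2^⌈K/L⌉)`. Dividing by `T → ∞` gives both asymptotic bounds.
-/

open Filter Topology

namespace Nat

theorem choose_succ_le_choose_of_le_two_mul_add_one {n k : ℕ} (h : n ≤ 2 * k + 1) :
    n.choose (k + 1) ≤ n.choose k := by
  refine Nat.le_of_mul_le_mul_right ?_ k.succ_pos
  rw [choose_succ_right_eq]
  exact Nat.mul_le_mul_left _ (by omega)

theorem succ_choose_le_two_mul_choose {n k : ℕ} (h : 2 * k ≤ n + 1) :
    (n + 1).choose k ≤ 2 * n.choose k := by
  refine Nat.le_of_mul_le_mul_right ?_ n.succ_pos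
  calc (n + 1).choose k * (n + 1) ≤ (n + 1).choose k * (2 * (n + 1 - k)) :=
        Nat.mul_le_mul_left _ (by omega)
    _ = 2 * n.choose k * (n + 1) := by rw [mul_assoc, choose_mul_succ_eq]; ring

theorem add_add_choose_le_two_pow_mul {a m : ℕ} (h : m ≤ a) (D : ℕ) :
    (a + D + m).choose m ≤ 2 ^ D * (a + m).choose m := by
  induction D with
  | zero => simp
  | succ D ih =>
    calc (a + (D + 1) + m).choose m = (a + D + m + 1).choose m := by ring_nf
      _ ≤ 2 * (a + D + m).choose m := succ_choose_le_two_mul_choose (by omega)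
      _ ≤ 2 * (2 ^ D * (a + m).choose m) := Nat.mul_le_mul_left _ ih
      _ = 2 ^ (D + 1) * (a + m).choose m := by ring

theorem add_choose_succ_lt_add_choose {a a' m : ℕ} (ha : a ≤ m + 1) (h : a' + 2 ≤ a) :
    (a' + (m + 1)).choose (m + 1) < (a + m).choose m := by
  obtain ⟨b, rfl⟩ : ∃ b, a = b + 2 := ⟨a - 2, by omega⟩
  have hmono : (a' + (m + 1)).choose (m + 1) ≤ (b + m + 1).choose (m + 1) :=
    choose_le_choose _ (by omega)
  have hpascal : (b + m + 2).choose (m + 1) = (b + m + 1).choose m + (b + m + 1).choose (m + 1) :=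
    choose_succ_succ _ _
  have hpos : 0 < (b + m + 1).choose m := choose_pos (by omega)
  have hpast_middle : (b + m + 2).choose (m + 1) ≤ (b + m + 2).choose m :=
    choose_succ_le_choose_of_le_two_mul_add_one (by omega)
  rw [show b + 2 + m = b + m + 2 by ring]
  omega

theorem add_choose_lt_add_choose_succ {a a' m D : ℕ} (hd : a ≤ a' + D)
    (h : (m + 1) * 2 ^ D ≤ a') : (a + m).choose m < (a' + (m + 1)).choose (m + 1) := by
  have hma : m ≤ a' := by nlinarith [D.one_le_two_pow]
  have hpos : 0 < (a' + m).choose m := choose_pos (by omega)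
  refine Nat.lt_of_mul_lt_mul_left (a := m + 1) ?_
  calc (m + 1) * (a + m).choose m ≤ (m + 1) * (2 ^ D * (a' + m).choose m) :=
        Nat.mul_le_mul_left _
          ((choose_le_choose _ (by omega)).trans (add_add_choose_le_two_pow_mul hma D))
    _ = (m + 1) * 2 ^ D * (a' + m).choose m := by ring
    _ ≤ a' * (a' + m).choose m := Nat.mul_le_mul_right _ h
    _ < (a' + m + 1) * (a' + m).choose m := Nat.mul_lt_mul_of_pos_right (by omega) hpos
    _ = (m + 1) * (a' + (m + 1)).choose (m + 1) := by
        rw [add_one_mul_choose_eq, ← add_assoc]; ring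

end Nat

theorem le_liminf_and_limsup_le {ι : Type*} {l : Filter ι} [l.NeBot] {u e : ι → ℝ} {α a : ℝ}
    (he : Tendsto e l (𝓝 0)) (hlow : ∀ᶠ i in l, α ≤ u i) (hup : ∀ᶠ i in l, u i ≤ a + e i) :
    α ≤ liminf u l ∧ limsup u l ≤ a := by
  have hae : Tendsto (fun i => a + e i) l (𝓝 a) := by simpa using tendsto_const_nhds.add he
  refine ⟨le_liminf_of_le (hae.isBoundedUnder_le.mono_le hup).isCoboundedUnder_ge hlow, ?_⟩
  calc limsup u l ≤ limsup (fun i => a + e i) l :=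
        limsup_le_limsup hup (isCoboundedUnder_le_of_eventually_le l hlow) hae.isBoundedUnder_le
    _ = a := hae.limsup_eq

namespace BinomialMaximizer

variable {L K T : ℝ}

/-- In the paper's notation, `F_j = leftover L K T_j Q_j`. -/
noncomputable def leftover (L K T : ℝ) (m : ℕ) : ℕ := ⌊(T - m * K) / L⌋₊

def IsMaximizer (L K T : ℝ) (Q : ℕ) : Prop :=
  1 ≤ Q ∧ Q ≤ ⌊T / K⌋₊ ∧ ∀ m : ℕ, 1 ≤ m → m ≤ ⌊T / K⌋₊ →
    (leftover L K T m + m).choose m ≤ (leftover L K T Q + Q).choose Q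

theorem leftover_succ_add_two_le (hL : 0 < L) (hK : 2 * L ≤ K) {m : ℕ} (h : (m + 1) * K ≤ T) :
    leftover L K T (m + 1) + 2 ≤ leftover L K T m := by
  have hx : 0 ≤ (T - (m + 1) * K) / L := div_nonneg (by linarith) hL.le
  have hstep : (T - (m + 1) * K) / L + 2 ≤ (T - m * K) / L := by
    rw [div_add' _ _ _ hL.ne', div_le_div_iff_of_pos_right hL]
    linarith
  unfold leftover
  push_cast
  rw [← Nat.floor_add_ofNat hx]
  exact Nat.floor_mono hstep

theorem leftover_le_succ_add_ceil (hL : 0 < L) {m : ℕ} (h : (m + 1) * K ≤ T) :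
    leftover L K T m ≤ leftover L K T (m + 1) + ⌈K / L⌉₊ := by
  have hx : 0 ≤ (T - (m + 1) * K) / L := div_nonneg (by linarith) hL.le
  have hstep : (T - m * K) / L ≤ (T - (m + 1) * K) / L + ⌈K / L⌉₊ := by
    have hsplit : (T - m * K) / L = (T - (m + 1) * K) / L + K / L := by field_simp; ring
    rw [hsplit]
    exact add_le_add_right (Nat.le_ceil _) _
  unfold leftover
  push_cast
  rw [← Nat.floor_add_natCast hx]
  exact Nat.floor_mono hstep

namespace IsMaximizer

variable {Q : ℕ}

theorem sub_one_mul_le (hQ : IsMaximizer L K T Q) (hL : 0 < L) (hK : 2 * L ≤ K) :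
    ((Q : ℝ) - 1) * (L + K) ≤ T := by
  obtain ⟨hQ1, hQN, hmax⟩ := hQ
  have hK0 : 0 < K := by linarith
  have hQT : (Q : ℝ) * K ≤ T := by
    rw [← le_div_iff₀ hK0]
    exact (Nat.le_floor_iff' (by omega)).1 hQN
  by_contra! hlt
  obtain ⟨m, rfl⟩ : ∃ m, Q = m + 1 := ⟨Q - 1, by omega⟩
  push_cast at hlt hQT
  have hm : 0 < m := by
    have : (0 : ℝ) < m := by nlinarith
    exact_mod_cast this
  have hsmall : leftover L K T m ≤ m + 1 := by
    refine Nat.lt_succ_iff.1 ((Nat.floor_lt' (by omega)).2 ?_)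
    rw [div_lt_iff₀ hL]
    push_cast
    nlinarith
  exact (Nat.add_choose_succ_lt_add_choose hsmall
    (leftover_succ_add_two_le hL hK hQT)).not_ge (hmax m hm (by omega))

theorem lt_succ_mul (hQ : IsMaximizer L K T Q) (hL : 0 < L) (hK : 0 < K) :
    T < (Q + 1) * (K + L * 2 ^ ⌈K / L⌉₊) := by
  by_contra! h
  have hQT : ((Q : ℝ) + 1) * K ≤ T :=
    le_trans (mul_le_mul_of_nonneg_left (le_add_of_nonneg_right (by positivity)) (by positivity)) h
  have hQN : Q + 1 ≤ ⌊T / K⌋₊ := by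
    refine (Nat.le_floor_iff' (by omega)).2 ?_
    rw [le_div_iff₀ hK]
    exact_mod_cast hQT
  have hlarge : (Q + 1) * 2 ^ ⌈K / L⌉₊ ≤ leftover L K T (Q + 1) := by
    refine Nat.le_floor ?_
    rw [le_div_iff₀ hL]
    push_cast
    linarith
  exact (Nat.add_choose_lt_add_choose_succ (leftover_le_succ_add_ceil hL hQT) hlarge).not_ge
    (hQ.2.2 (Q + 1) (by omega) hQN)

end IsMaximizer

end BinomialMaximizer

open BinomialMaximizer

/-- In the setup (L > 0, K ≥ K₀, increasing (T_j) of positive reals with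
T_j → ∞, maximizers Q_j), there exists α > 0 with α ≤ liminf Q_j/T_j, and
limsup Q_j/T_j ≤ 1/(L + K). -/
theorem stmt15 (L : ℝ) (hL : 0 < L) :
    ∃ K₀ : ℝ, 0 < K₀ ∧ ∀ K : ℝ, K₀ ≤ K →
    ∀ (T : ℕ → ℝ) (Q : ℕ → ℕ), StrictMono T → (∀ j, 0 < T j) →
    Tendsto T atTop atTop →
    (∀ j, 1 ≤ ⌊T j / K⌋₊ →
      1 ≤ Q j ∧ Q j ≤ ⌊T j / K⌋₊ ∧
      ∀ m : ℕ, 1 ≤ m → m ≤ ⌊T j / K⌋₊ →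
        Nat.choose (⌊(T j - (m : ℝ) * K) / L⌋₊ + m) m ≤
          Nat.choose (⌊(T j - (Q j : ℝ) * K) / L⌋₊ + Q j) (Q j)) →
    ∃ α : ℝ, 0 < α ∧ α ≤ Filter.liminf (fun j => (Q j : ℝ) / T j) atTop ∧
      Filter.limsup (fun j => (Q j : ℝ) / T j) atTop ≤ 1 / (L + K) := by
  refine ⟨2 * L, by positivity, fun K hK T Q _ _ hT hQ => ?_⟩
  have hK0 : 0 < K := by linarith
  set c : ℝ := K + L * 2 ^ ⌈K / L⌉₊
  have hc : 0 < c := by positivity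
  have hbounds : ∀ᶠ j in atTop,
      ((Q j : ℝ) - 1) * (L + K) ≤ T j ∧ T j < (Q j + 1) * c ∧ 2 * c ≤ T j := by
    filter_upwards [hT.eventually_ge_atTop (max K (2 * c))] with j hj
    have hQj : IsMaximizer L K (T j) (Q j) :=
      hQ j (Nat.one_le_floor_iff _ |>.2 ((one_le_div hK0).2 (le_of_max_le_left hj)))
    exact ⟨hQj.sub_one_mul_le hL hK, hQj.lt_succ_mul hL hK0, le_of_max_le_right hj⟩
  refine ⟨1 / (2 * c), by positivity,
    le_liminf_and_limsup_le (tendsto_inv_atTop_zero.comp hT) ?_ ?_⟩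
  · filter_upwards [hbounds] with j ⟨_, hlt, hTc⟩
    rw [div_le_div_iff₀ (by positivity) (by linarith)]
    nlinarith
  · filter_upwards [hbounds] with j ⟨hle, _, hTc⟩
    have hTj : 0 < T j := by linarith
    rw [Function.comp_apply, one_div, div_le_iff₀ hTj, add_mul, inv_mul_cancel₀ hTj.ne',
      inv_mul_eq_div, div_add_one (by positivity), le_div_iff₀ (by positivity)]
    linarith
end

section
/- For every L > 0 there exists K₀ > 0 such that for all K ≥ K₀ the following holds: for every increasing sequence (T_j) of positive reals with T_j → ∞ and every choice of maximizers Q_j as in the setup, if the limit H := lim_{j→∞} Q_j/T_j exists, then lim_{j→∞} (1/T_j)·(Q_j·log(1 + F_j/Q_j) + F_j·log(1 + Q_j/F_j)) = H·log(1 − K/L + 1/(H·L)) + ((1 − H·K)/L)·log(1 + H·L/(1 − H·K)). -/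
/-! Testing the maximality of `Q` against `m ≈ T / (2 (L + K))` gives
`C(F + Q, Q) ≥ 2 ^ m`, exponential in `T`, whereas `log C(n, k) ≤ k (1 + log n - log k)` with
`n = F + Q = O(T)`. Hence neither `Q / T` nor `F / T` can tend to `0`: `Q / T → H > 0` and
`F / T → (1 - H K) / L > 0`. The expression is `pairEntropy (Q / T) (F / T)` by homogeneity,
and `pairEntropy` is continuous at that limit point. -/

open Filter Topology Real

lemma Nat.two_pow_le_centralBinom (n : ℕ) : 2 ^ n ≤ n.centralBinom := by
  induction n with
  | zero => simp
  | succ n ih =>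
    have hstep : (n + 1) * (2 * n.centralBinom) ≤ (n + 1) * (n + 1).centralBinom := by
      rw [Nat.succ_mul_centralBinom_succ]
      nlinarith [n.centralBinom_pos]
    calc 2 ^ (n + 1) = 2 * 2 ^ n := by ring
      _ ≤ 2 * n.centralBinom := by omega
      _ ≤ (n + 1).centralBinom := Nat.le_of_mul_le_mul_left hstep n.succ_pos

lemma Nat.two_pow_le_choose_add {m n : ℕ} (h : m ≤ n) : 2 ^ m ≤ (n + m).choose m :=
  (Nat.two_pow_le_centralBinom m).trans <| by
    rw [Nat.centralBinom_eq_two_mul_choose]; exact Nat.choose_le_choose m (by omega)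

lemma Real.log_choose_le {n k : ℕ} (hkn : k ≤ n) :
    log (n.choose k) ≤ k * (1 + log n - log k) := by
  rcases k.eq_zero_or_pos with rfl | hk
  · simp
  have hk' : (0 : ℝ) < k := by exact_mod_cast hk
  have hn : (0 : ℝ) < n := by exact_mod_cast hk.trans_le hkn
  have hbound : (n.choose k : ℝ) ≤ (n * exp 1 / k) ^ k :=
    calc (n.choose k : ℝ) ≤ n ^ k / k.factorial := Nat.choose_le_pow_div k n
      _ = (n / k) ^ k * (k ^ k / k.factorial) := by rw [div_pow]; field_simp
      _ ≤ (n / k) ^ k * exp k := by gcongr; exact pow_div_factorial_le_exp _ hk'.le k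
      _ = (n * exp 1 / k) ^ k := by rw [← exp_one_pow]; ring
  calc log (n.choose k) ≤ log ((n * exp 1 / k) ^ k) :=
        log_le_log (by exact_mod_cast Nat.choose_pos hkn) hbound
    _ = k * (1 + log n - log k) := by
        rw [log_pow, log_div (by positivity) hk'.ne', log_mul hn.ne' (exp_ne_zero 1), log_exp]
        ring

lemma div_le_mul_sub_log_of_le_log_choose {n k : ℕ} {T C B : ℝ} (hkn : k ≤ n) (hT : 0 < T)
    (hn : (n : ℝ) ≤ C * T) (hB : B ≤ log (n.choose k)) :
    B / T ≤ k / T * (1 + log C - log (k / T)) := by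
  rcases k.eq_zero_or_pos with rfl | hk
  · simpa using div_le_div_of_nonneg_right hB hT.le
  have hk' : (0 : ℝ) < k := by exact_mod_cast hk
  have hn' : (0 : ℝ) < n := by exact_mod_cast hk.trans_le hkn
  have hC : 0 < C := pos_of_mul_pos_left (hn'.trans_le hn) hT.le
  have hlog : log n ≤ log C + log T := by
    rw [← log_mul hC.ne' hT.ne']; exact log_le_log hn' hn
  calc B / T ≤ k * (1 + log n - log k) / T := by
        gcongr; exact hB.trans (log_choose_le hkn)
    _ ≤ k * (1 + (log C + log T) - log k) / T := by gcongr
    _ = k / T * (1 + log C - log (k / T)) := by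
        rw [log_div hk'.ne' hT.ne']; ring

/-- The `F` of the setup, as a function of `m`. -/
noncomputable def remainderCount (L K T : ℝ) (m : ℕ) : ℕ := ⌊(T - m * K) / L⌋₊

section remainderCount

variable {L K T : ℝ} {Q : ℕ}

lemma sub_inv_le_remainderCount_div (hT : 0 < T) :
    (1 - Q / T * K) / L - 1 / T ≤ remainderCount L K T Q / T := by
  have := Nat.lt_floor_add_one ((T - Q * K) / L)
  rw [remainderCount, le_div_iff₀ hT]
  calc ((1 - Q / T * K) / L - 1 / T) * T = (T - Q * K) / L - 1 := by field_simp
    _ ≤ _ := by linarith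

lemma cast_mul_le_of_le_floor_div (hK : 0 < K) (hT : 0 ≤ T) (hQ : Q ≤ ⌊T / K⌋₊) :
    (Q : ℝ) * K ≤ T := by
  rw [← le_div_iff₀ hK]
  exact (Nat.cast_le.mpr hQ).trans (Nat.floor_le (by positivity))

lemma remainderCount_div_le (hL : 0 < L) (hK : 0 < K) (hT : 0 < T) (hQ : Q ≤ ⌊T / K⌋₊) :
    remainderCount L K T Q / T ≤ (1 - Q / T * K) / L := by
  have hQK := cast_mul_le_of_le_floor_div hK hT.le hQ
  have := Nat.floor_le (div_nonneg (sub_nonneg.mpr hQK) hL.le)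
  rw [remainderCount, div_le_iff₀ hT]
  calc _ ≤ (T - Q * K) / L := this
    _ = (1 - Q / T * K) / L * T := by field_simp

lemma remainderCount_add_le (hL : 0 < L) (hK : 0 < K) (hT : 0 ≤ T) (hQ : Q ≤ ⌊T / K⌋₊) :
    ((remainderCount L K T Q + Q : ℕ) : ℝ) ≤ (1 / L + 1 / K) * T := by
  have hF : (remainderCount L K T Q : ℝ) ≤ T / L :=
    (Nat.cast_le.mpr (Nat.floor_le_floor (by gcongr; nlinarith))).trans
      (Nat.floor_le (by positivity))
  have hQ' : (Q : ℝ) ≤ T / K := (Nat.cast_le.mpr hQ).trans (Nat.floor_le (by positivity))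
  push_cast
  linarith [show (1 / L + 1 / K) * T = T / L + T / K by ring]

lemma log_two_mul_le_log_choose_remainderCount (hL : 0 < L) (hK : 0 < K)
    (hmax : ∀ m : ℕ, 1 ≤ m → m ≤ ⌊T / K⌋₊ →
      (remainderCount L K T m + m).choose m ≤ (remainderCount L K T Q + Q).choose Q) :
    (T / (2 * (L + K)) - 1) * log 2 ≤ log ((remainderCount L K T Q + Q).choose Q) := by
  have hlog2 := log_pos one_lt_two
  set m := ⌊T / (2 * (L + K))⌋₊
  have hm_gt : T / (2 * (L + K)) - 1 < m := by linarith [Nat.lt_floor_add_one (T / (2 * (L + K)))]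
  rcases m.eq_zero_or_pos with hm | hm
  · rw [hm, Nat.cast_zero] at hm_gt
    nlinarith [log_natCast_nonneg ((remainderCount L K T Q + Q).choose Q)]
  have hmT : (m : ℝ) * (2 * (L + K)) ≤ T := by
    rw [← le_div_iff₀ (by positivity)]
    exact Nat.floor_le (zero_le_one.trans (Nat.floor_pos.mp hm))
  have hm_le : m ≤ ⌊T / K⌋₊ := Nat.le_floor (by rw [le_div_iff₀ hK]; nlinarith)
  have hm_rem : m ≤ remainderCount L K T m := Nat.le_floor (by rw [le_div_iff₀ hL]; nlinarith)
  have hpow := (Nat.two_pow_le_choose_add hm_rem).trans (hmax m hm hm_le)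
  calc (T / (2 * (L + K)) - 1) * log 2 ≤ m * log 2 := by gcongr
    _ = log ((2 : ℕ) ^ m : ℕ) := by push_cast; rw [log_pow]
    _ ≤ _ := log_le_log (by positivity) (Nat.cast_le.mpr hpow)

lemma log_two_div_sub_le_mul_sub_log (hL : 0 < L) (hK : 0 < K) (hT : 0 < T)
    (hQ : Q ≤ ⌊T / K⌋₊) (hmax : ∀ m : ℕ, 1 ≤ m → m ≤ ⌊T / K⌋₊ →
      (remainderCount L K T m + m).choose m ≤ (remainderCount L K T Q + Q).choose Q)
    {k : ℕ} (hk : k ≤ remainderCount L K T Q + Q)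
    (hchoose : (remainderCount L K T Q + Q).choose k = (remainderCount L K T Q + Q).choose Q) :
    log 2 / (2 * (L + K)) - log 2 / T ≤ k / T * (1 + log (1 / L + 1 / K) - log (k / T)) := by
  have hlog := log_two_mul_le_log_choose_remainderCount hL hK hmax
  rw [← hchoose] at hlog
  calc log 2 / (2 * (L + K)) - log 2 / T = (T / (2 * (L + K)) - 1) * log 2 / T := by
        field_simp
    _ ≤ _ := div_le_mul_sub_log_of_le_log_choose hk hT (remainderCount_add_le hL hK hT.le hQ) hlog

lemma tendsto_remainderCount_div (hL : 0 < L) (hK : 0 < K) {T : ℕ → ℝ} {Q : ℕ → ℕ} {H : ℝ}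
    (hT_pos : ∀ j, 0 < T j) (hT_top : Tendsto T atTop atTop)
    (hQ : ∀ᶠ j in atTop, Q j ≤ ⌊T j / K⌋₊) (hH : Tendsto (fun j => (Q j : ℝ) / T j) atTop (𝓝 H)) :
    Tendsto (fun j => (remainderCount L K (T j) (Q j) : ℝ) / T j) atTop (𝓝 ((1 - H * K) / L)) := by
  have hup : Tendsto (fun j => (1 - Q j / T j * K) / L) atTop (𝓝 ((1 - H * K) / L)) :=
    (tendsto_const_nhds.sub (hH.mul_const K)).div_const L
  refine tendsto_of_tendsto_of_tendsto_of_le_of_le'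
    (by simpa using hup.sub ((tendsto_const_nhds (x := (1 : ℝ))).div_atTop hT_top)) hup
    (Eventually.of_forall fun j => sub_inv_le_remainderCount_div (hT_pos j))
    (hQ.mono fun j hj => remainderCount_div_le hL hK (hT_pos j) hj)

end remainderCount

/-- `pairEntropy a b ≈ log C(a + b, a)` for large `a, b`; for `a, b > 0` it equals
`(a + b) * binEntropy (a / (a + b))`. -/
noncomputable def pairEntropy (a b : ℝ) : ℝ := a * log (1 + b / a) + b * log (1 + a / b)

lemma pairEntropy_div (a b : ℝ) {t : ℝ} (ht : t ≠ 0) :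
    pairEntropy (a / t) (b / t) = pairEntropy a b / t := by
  simp only [pairEntropy, div_div_div_cancel_right₀ ht]
  ring

lemma Filter.Tendsto.pairEntropy {α : Type*} {l : Filter α} {u v : α → ℝ} {a b : ℝ}
    (hu : Tendsto u l (𝓝 a)) (hv : Tendsto v l (𝓝 b)) (ha : 0 < a) (hb : 0 < b) :
    Tendsto (fun i => pairEntropy (u i) (v i)) l (𝓝 (pairEntropy a b)) :=
  (hu.mul ((tendsto_const_nhds.add (hv.div hu ha.ne')).log (by positivity : 1 + b / a ≠ 0))).add
    (hv.mul ((tendsto_const_nhds.add (hu.div hv hb.ne')).log (by positivity : 1 + a / b ≠ 0)))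

/-- The point is that `u (A - log u) → 0` as `u → 0⁺`. -/
lemma pos_of_tendsto_of_le_mul_sub_log {α : Type*} {l : Filter α} [l.NeBot] {u b : α → ℝ}
    {a c A : ℝ} (hc : 0 < c) (hu : Tendsto u l (𝓝 a)) (hu0 : ∀ᶠ i in l, 0 ≤ u i)
    (hb : Tendsto b l (𝓝 c)) (hbu : ∀ᶠ i in l, b i ≤ u i * (A - log (u i))) : 0 < a := by
  have hcont : Continuous fun x : ℝ => x * (A - log x) := by
    refine ((continuous_const_mul A).sub continuous_mul_log).congr fun x => ?_
    simp only [Pi.sub_apply]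
    ring
  have hca := le_of_tendsto_of_tendsto hb ((hcont.tendsto a).comp hu) hbu
  rcases (ge_of_tendsto hu hu0).eq_or_lt with rfl | ha
  · simp at hca; linarith
  · exact ha

/-- In the setup, if H = lim Q_j/T_j exists, then
(1/T_j)·(Q_j·log(1 + F_j/Q_j) + F_j·log(1 + Q_j/F_j)) →
H·log(1 − K/L + 1/(HL)) + ((1 − HK)/L)·log(1 + HL/(1 − HK)). -/
theorem stmt17 (L : ℝ) (hL : 0 < L) :
    ∃ K₀ : ℝ, 0 < K₀ ∧ ∀ K : ℝ, K₀ ≤ K →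
    ∀ (T : ℕ → ℝ) (Q : ℕ → ℕ), StrictMono T → (∀ j, 0 < T j) →
    Tendsto T atTop atTop →
    (∀ j, 1 ≤ ⌊T j / K⌋₊ →
      1 ≤ Q j ∧ Q j ≤ ⌊T j / K⌋₊ ∧
      ∀ m : ℕ, 1 ≤ m → m ≤ ⌊T j / K⌋₊ →
        Nat.choose (⌊(T j - (m : ℝ) * K) / L⌋₊ + m) m ≤
          Nat.choose (⌊(T j - (Q j : ℝ) * K) / L⌋₊ + Q j) (Q j)) →
    ∀ H : ℝ, Tendsto (fun j => (Q j : ℝ) / T j) atTop (nhds H) →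
      Tendsto (fun j => (1 / T j) *
        ((Q j : ℝ) * Real.log (1 + (⌊(T j - (Q j : ℝ) * K) / L⌋₊ : ℝ) / (Q j : ℝ)) +
          (⌊(T j - (Q j : ℝ) * K) / L⌋₊ : ℝ) *
            Real.log (1 + (Q j : ℝ) / (⌊(T j - (Q j : ℝ) * K) / L⌋₊ : ℝ)))) atTop
        (nhds (H * Real.log (1 - K / L + 1 / (H * L)) +
          ((1 - H * K) / L) * Real.log (1 + H * L / (1 - H * K)))) := by
  refine ⟨1, one_pos, fun K hK T Q _ hT_pos hT_top hmax H hH => ?_⟩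
  have hK0 : 0 < K := one_pos.trans_le hK
  have hQ_max : ∀ᶠ j in atTop, Q j ≤ ⌊T j / K⌋₊ ∧ ∀ m : ℕ, 1 ≤ m → m ≤ ⌊T j / K⌋₊ →
      (remainderCount L K (T j) m + m).choose m ≤
        (remainderCount L K (T j) (Q j) + Q j).choose (Q j) := by
    filter_upwards [hT_top.eventually_ge_atTop K] with j hj
    exact (hmax j (Nat.le_floor (by rw [Nat.cast_one, le_div_iff₀ hK0]; linarith))).2
  have hG := tendsto_remainderCount_div hL hK0 hT_pos hT_top (hQ_max.mono fun _ h => h.1) hH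
  have hlow : Tendsto (fun j => log 2 / (2 * (L + K)) - log 2 / T j) atTop
      (𝓝 (log 2 / (2 * (L + K)))) := by
    simpa using tendsto_const_nhds.sub ((tendsto_const_nhds (x := log 2)).div_atTop hT_top)
  have hc : 0 < log 2 / (2 * (L + K)) := div_pos (log_pos one_lt_two) (by positivity)
  have hH_pos : 0 < H := pos_of_tendsto_of_le_mul_sub_log hc hH
    (Eventually.of_forall fun j => div_nonneg (Nat.cast_nonneg _) (hT_pos j).le) hlow
    (hQ_max.mono fun j hj =>
      log_two_div_sub_le_mul_sub_log hL hK0 (hT_pos j) hj.1 hj.2 (by omega) rfl)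
  have hG_pos : 0 < (1 - H * K) / L := pos_of_tendsto_of_le_mul_sub_log hc hG
    (Eventually.of_forall fun j => div_nonneg (Nat.cast_nonneg _) (hT_pos j).le) hlow
    (hQ_max.mono fun j hj =>
      log_two_div_sub_le_mul_sub_log hL hK0 (hT_pos j) hj.1 hj.2 (by omega) Nat.choose_symm_add)
  have hlimit : pairEntropy H ((1 - H * K) / L) = H * log (1 - K / L + 1 / (H * L)) +
      ((1 - H * K) / L) * log (1 + H * L / (1 - H * K)) := by
    rw [pairEntropy]
    congr 3
    · field_simp
      ring
    · field_simp
  rw [← hlimit]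
  refine (hH.pairEntropy hG hH_pos hG_pos).congr fun j => ?_
  rw [pairEntropy_div _ _ (hT_pos j).ne', one_div_mul_eq_div]
  rfl
end

section
/- For every L > 0 there exists K₀ > 0 such that for all K ≥ K₀ the following holds: for every increasing sequence (T_j) of positive reals with T_j → ∞ and every choice of maximizers Q_j as in the setup, if the limit H := lim_{j→∞} Q_j/T_j exists, then lim_{j→∞} (1/T_j)·log C(F_j + Q_j, Q_j) = H·log(1 − K/L + 1/(H·L)) + ((1 − H·K)/L)·log(1 + H·L/(1 − H·K)). -/
/-!
Stirling's formula `log n! = n log n - n + O(log n)` shows that whenever `a/T → G` and `b/T → H`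
with `T → ∞`, the normalised log-binomial `(1/T) log C(a + b, b)` tends to the entropy
`η G + η H - η (G + H)`, where `η x = -x log x`. Since `Q ≤ T/K`, the floor `F` satisfies
`F/T → (1 - HK)/L`, and the claimed limit is this entropy rewritten.
-/

open Filter Real Topology
open scoped Nat

lemma mul_log_sub_le_log_factorial (n : ℕ) : n * log n - n ≤ log n ! := by
  obtain rfl | hn := eq_or_ne n 0
  · simp
  have h2π : 0 ≤ log (2 * π) := log_nonneg (by linarith [pi_gt_three])
  linarith [Stirling.le_log_factorial_stirling hn, log_natCast_nonneg n]

lemma log_factorial_le (n : ℕ) : log n ! ≤ n * log n - n + log n / 2 + 1 := by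
  rcases n with _ | m
  · simp
  have hmono : log (Stirling.stirlingSeq (m + 1)) ≤ log (Stirling.stirlingSeq 1) :=
    Stirling.log_stirlingSeq'_antitone (Nat.zero_le m)
  have hm : (0 : ℝ) < (m + 1 : ℕ) := by positivity
  have hone : log (Stirling.stirlingSeq 1) = 1 - log 2 / 2 := by
    rw [Stirling.stirlingSeq_one, log_div (exp_pos 1).ne' (by positivity), log_exp,
      log_sqrt zero_le_two]
  rw [hone, Stirling.log_stirlingSeq_formula, log_div hm.ne' (exp_pos 1).ne', log_exp,
    log_mul two_ne_zero hm.ne'] at hmono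
  linarith

lemma log_le_div_add_log {x T : ℝ} (hx : 0 ≤ x) (hT : 1 ≤ T) : log x ≤ x / T + log T := by
  obtain rfl | hx := hx.eq_or_lt
  · simpa using log_nonneg hT
  have hT0 : 0 < T := one_pos.trans_le hT
  calc log x = log (x / T) + log T := by rw [log_div hx.ne' hT0.ne', sub_add_cancel]
    _ ≤ x / T + log T := by gcongr; exact log_le_self (div_nonneg hx.le hT0.le)

lemma log_choose_add (a b : ℕ) :
    log ((a + b).choose b) = log (a + b)! - log a ! - log b ! := by
  have h : ((a + b).choose b : ℝ) * a ! * b ! = (a + b)! := by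
    exact_mod_cast Nat.add_choose_mul_factorial_mul_factorial a b
  have hc : ((a + b).choose b : ℝ) ≠ 0 := by
    exact_mod_cast (Nat.choose_pos (Nat.le_add_left b a)).ne'
  rw [← h, log_mul (mul_ne_zero hc (by positivity)) (by positivity), log_mul hc (by positivity)]
  ring

lemma negMulLog_div (x : ℝ) {T : ℝ} (hT : T ≠ 0) :
    negMulLog (x / T) = (x * log T - x * log x) / T := by
  obtain rfl | hx := eq_or_ne x 0
  · simp
  rw [negMulLog, log_div hx hT]
  ring

lemma negMulLog_add_negMulLog_sub_negMulLog (x y : ℝ) :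
    negMulLog x + negMulLog y - negMulLog (x + y) =
      x * log ((x + y) / x) + y * log ((x + y) / y) := by
  obtain rfl | hx := eq_or_ne x 0
  · simp
  obtain rfl | hy := eq_or_ne y 0
  · simp
  obtain hxy | hxy := eq_or_ne (x + y) 0
  · rw [eq_neg_of_add_eq_zero_right hxy, add_neg_cancel]
    simp [negMulLog, log_neg_eq_log]
  rw [negMulLog, negMulLog, negMulLog, log_div hxy hx, log_div hxy hy]
  ring

section Asymptotics

variable {ι : Type*} {l : Filter ι} {T : ι → ℝ}

lemma tendsto_log_factorial_sub_div {n : ι → ℕ} {c : ℝ}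
    (hT : Tendsto T l atTop) (hn : Tendsto (fun i => (n i : ℝ) / T i) l (𝓝 c)) :
    Tendsto (fun i => (log (n i)! - (n i * log (n i) - n i)) / T i) l (𝓝 0) := by
  have hbound : Tendsto (fun i => (1 + n i / T i) / T i + log (T i) / T i) l (𝓝 0) := by
    simpa using ((tendsto_const_nhds.add hn).div_atTop hT).add
      (isLittleO_log_id_atTop.tendsto_div_nhds_zero.comp hT)
  refine tendsto_of_tendsto_of_tendsto_of_le_of_le' tendsto_const_nhds hbound ?_ ?_
  · filter_upwards [hT.eventually_gt_atTop 0] with i hTi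
    exact div_nonneg (sub_nonneg.2 (mul_log_sub_le_log_factorial _)) hTi.le
  · filter_upwards [hT.eventually_ge_atTop 1] with i hTi
    have hT0 : 0 < T i := one_pos.trans_le hTi
    rw [← add_div]
    gcongr
    linarith [log_factorial_le (n i), log_natCast_nonneg (n i),
      log_le_div_add_log (Nat.cast_nonneg (n i)) hTi]

lemma tendsto_log_choose_div {a b : ι → ℕ} {G H : ℝ}
    (hT : Tendsto T l atTop) (ha : Tendsto (fun i => (a i : ℝ) / T i) l (𝓝 G))
    (hb : Tendsto (fun i => (b i : ℝ) / T i) l (𝓝 H)) :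
    Tendsto (fun i => 1 / T i * log ((a i + b i).choose (b i))) l
      (𝓝 (negMulLog G + negMulLog H - negMulLog (G + H))) := by
  have hab : Tendsto (fun i => ((a i + b i : ℕ) : ℝ) / T i) l (𝓝 (G + H)) :=
    (ha.add hb).congr fun i => by push_cast; ring
  have hentropy := (((continuous_negMulLog.tendsto G).comp ha).add
    ((continuous_negMulLog.tendsto H).comp hb)).sub ((continuous_negMulLog.tendsto _).comp hab)
  have hremainder := ((tendsto_log_factorial_sub_div hT hab).sub
    (tendsto_log_factorial_sub_div hT ha)).sub (tendsto_log_factorial_sub_div hT hb)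
  have hlimit := hentropy.add hremainder
  rw [sub_zero, sub_zero, add_zero] at hlimit
  refine hlimit.congr' ?_
  filter_upwards [hT.eventually_ne_atTop 0] with i hTi
  -- the `n * log T` parts of `negMulLog (n / T)` cancel between `a`, `b` and `a + b`
  simp only [Function.comp_apply, negMulLog_div _ hTi, log_choose_add]
  push_cast
  ring

lemma tendsto_natFloor_div {x : ι → ℝ} {c : ℝ}
    (hT : Tendsto T l atTop) (hx : ∀ᶠ i in l, 0 ≤ x i)
    (h : Tendsto (fun i => x i / T i) l (𝓝 c)) :
    Tendsto (fun i => (⌊x i⌋₊ : ℝ) / T i) l (𝓝 c) := by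
  have hlower : Tendsto (fun i => x i / T i - 1 / T i) l (𝓝 (c - 0)) :=
    h.sub (tendsto_const_nhds.div_atTop hT)
  rw [sub_zero] at hlower
  refine tendsto_of_tendsto_of_tendsto_of_le_of_le' hlower h ?_ ?_
  all_goals filter_upwards [hx, hT.eventually_gt_atTop 0] with i hxi hTi
  · rw [← sub_div]
    gcongr
    exact (Nat.sub_one_lt_floor _).le
  · gcongr
    exact Nat.floor_le hxi

end Asymptotics

/-- In the setup, if H = lim Q_j/T_j exists, then
(1/T_j)·log C(F_j + Q_j, Q_j) →
H·log(1 − K/L + 1/(HL)) + ((1 − HK)/L)·log(1 + HL/(1 − HK)). -/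
theorem stmt18 (L : ℝ) (hL : 0 < L) :
    ∃ K₀ : ℝ, 0 < K₀ ∧ ∀ K : ℝ, K₀ ≤ K →
    ∀ (T : ℕ → ℝ) (Q : ℕ → ℕ), StrictMono T → (∀ j, 0 < T j) →
    Tendsto T atTop atTop →
    (∀ j, 1 ≤ ⌊T j / K⌋₊ →
      1 ≤ Q j ∧ Q j ≤ ⌊T j / K⌋₊ ∧
      ∀ m : ℕ, 1 ≤ m → m ≤ ⌊T j / K⌋₊ →
        Nat.choose (⌊(T j - (m : ℝ) * K) / L⌋₊ + m) m ≤
          Nat.choose (⌊(T j - (Q j : ℝ) * K) / L⌋₊ + Q j) (Q j)) →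
    ∀ H : ℝ, Tendsto (fun j => (Q j : ℝ) / T j) atTop (nhds H) →
      Tendsto (fun j => (1 / T j) *
        Real.log (Nat.choose (⌊(T j - (Q j : ℝ) * K) / L⌋₊ + Q j) (Q j))) atTop
        (nhds (H * Real.log (1 - K / L + 1 / (H * L)) +
          ((1 - H * K) / L) * Real.log (1 + H * L / (1 - H * K)))) := by
  refine ⟨1, one_pos, fun K hK T Q _ _ hT hmax H hH => ?_⟩
  have hK0 : 0 < K := one_pos.trans_le hK
  have hQK : ∀ᶠ j in atTop, (Q j : ℝ) * K ≤ T j := by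
    filter_upwards [(hT.atTop_div_const hK0).eventually_ge_atTop 1] with j hj
    have hQ := (hmax j (Nat.le_floor (by exact_mod_cast hj))).2.1
    rw [← le_div_iff₀ hK0]
    exact (Nat.cast_le.2 hQ).trans (Nat.floor_le (by linarith))
  have hF : Tendsto (fun j => (⌊(T j - Q j * K) / L⌋₊ : ℝ) / T j) atTop
      (𝓝 ((1 - H * K) / L)) := by
    refine tendsto_natFloor_div hT (hQK.mono fun j hj => div_nonneg (sub_nonneg.2 hj) hL.le) ?_
    refine (((hH.mul_const K).const_sub 1).div_const L).congr' ?_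
    filter_upwards [hT.eventually_gt_atTop 0] with j hj
    field_simp
  have hlimit := tendsto_log_choose_div hT hF hH
  rw [negMulLog_add_negMulLog_sub_negMulLog, add_comm] at hlimit
  -- `H = 0` and `H * K = 1` need no special treatment: there `0 * log _ = 0` on both sides
  convert hlimit using 3
  · obtain rfl | hH0 := eq_or_ne H 0
    · simp
    congr 2
    field_simp
    ring
  · obtain hHK | hHK := eq_or_ne (1 - H * K) 0
    · simp [hHK]
    congr 2
    field_simp
end

section
/- Let L > 0 be a constant and let (K_i) and (T_j) be increasing sequences of positive reals with K_i → ∞ and T_j → ∞. For each i and each j with ⌊T_j/K_i⌋ ≥ 1, let Q_{i,j} be an integer in {1, …, ⌊T_j/K_i⌋} such that C(⌊(T_j − Q_{i,j}·K_i)/L⌋ + Q_{i,j}, Q_{i,j}) ≥ C(⌊(T_j − m·K_i)/L⌋ + m, m) for every m ∈ {1, …, ⌊T_j/K_i⌋}. Then lim_{i→∞} limsup_{j→∞} (1/T_j)·log C(⌊(T_j − Q_{i,j}·K_i)/L⌋ + Q_{i,j}, Q_{i,j}) = 0. -/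
/-!
From `C(N, q) ≤ (e N / q)^q` and `log y ≤ 2 √y` one gets `log C(N, q) ≤ 2 √(e N q)`.
Here `N = ⌊(T_j - q K_i)/L⌋ + q ≤ T_j (1/L + 1/K_i)` and `q ≤ T_j / K_i`, so
`(1/T_j) log C(N, q) ≤ 2 √(e (1/L + 1/K_i) / K_i)` for every large `j` and every such `q`,
a bound that tends to `0` as `K_i → ∞`.
-/

open Filter Real
open scoped Nat

theorem Real.log_le_two_mul_sqrt {x : ℝ} (hx : 0 ≤ x) : log x ≤ 2 * √x := by
  have h := log_le_rpow_div hx (by norm_num : (0 : ℝ) < 1 / 2)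
  rwa [← sqrt_eq_rpow, div_eq_mul_inv, one_div, inv_inv, mul_comm] at h

theorem Real.mul_log_div_le_two_mul_sqrt {k y : ℝ} (hk : 0 ≤ k) (hy : 0 ≤ y) :
    k * log (y / k) ≤ 2 * √(y * k) := by
  rcases hk.eq_or_lt with rfl | hk
  · simp
  calc k * log (y / k) ≤ k * (2 * √(y / k)) :=
        mul_le_mul_of_nonneg_left (log_le_two_mul_sqrt (by positivity)) hk.le
    _ = 2 * √(y / k * (k * k)) := by
        rw [sqrt_mul (by positivity), sqrt_mul_self hk.le]; ring
    _ = 2 * √(y * k) := by field_simp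

theorem Nat.choose_le_exp_mul_div_pow (n k : ℕ) :
    (n.choose k : ℝ) ≤ (exp 1 * n / k) ^ k := by
  have hfac : (0 : ℝ) < k ! := mod_cast k.factorial_pos
  have hkk : (k : ℝ) ^ k ≤ exp 1 ^ k * k ! := by
    rw [exp_one_pow, ← div_le_iff₀ hfac]
    exact Real.pow_div_factorial_le_exp k k.cast_nonneg k
  calc (n.choose k : ℝ) ≤ (n : ℝ) ^ k / k ! := choose_le_pow_div k n
    _ ≤ (exp 1 * n / k) ^ k := by
        rcases k.eq_zero_or_pos with rfl | hk
        · simp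
        rw [div_pow, mul_pow, div_le_div_iff₀ hfac (by positivity)]
        calc (n : ℝ) ^ k * k ^ k ≤ n ^ k * (exp 1 ^ k * k !) := by gcongr
          _ = exp 1 ^ k * n ^ k * k ! := by ring

theorem Nat.log_choose_le_two_mul_sqrt (n k : ℕ) :
    Real.log (n.choose k) ≤ 2 * √(exp 1 * n * k) := by
  rcases (n.choose k).eq_zero_or_pos with h | h
  · rw [h, Nat.cast_zero, Real.log_zero]; positivity
  calc Real.log (n.choose k) ≤ Real.log ((exp 1 * n / k) ^ k) :=
        Real.log_le_log (mod_cast h) (choose_le_exp_mul_div_pow n k)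
    _ = k * Real.log (exp 1 * n / k) := Real.log_pow _ _
    _ ≤ 2 * √(exp 1 * n * k) :=
        mul_log_div_le_two_mul_sqrt k.cast_nonneg (by positivity)

theorem log_choose_floor_add_le {T K L : ℝ} {q : ℕ} (hK : 0 < K) (hL : 0 < L)
    (hq : q * K ≤ T) :
    log ((⌊(T - q * K) / L⌋₊ + q).choose q) ≤
      2 * T * √(exp 1 * (L⁻¹ + K⁻¹) * K⁻¹) := by
  have hT : 0 ≤ T := (by positivity : (0 : ℝ) ≤ q * K).trans hq
  have hqT : (q : ℝ) ≤ T * K⁻¹ := by rwa [← div_eq_mul_inv, le_div_iff₀ hK]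
  have hfloor : (⌊(T - q * K) / L⌋₊ : ℝ) ≤ T * L⁻¹ := by
    refine (Nat.floor_le (div_nonneg (by linarith) hL.le)).trans ?_
    rw [div_eq_mul_inv]
    gcongr
    linarith [(by positivity : (0 : ℝ) ≤ q * K)]
  calc log ((⌊(T - q * K) / L⌋₊ + q).choose q)
      ≤ 2 * √(exp 1 * ((⌊(T - q * K) / L⌋₊ + q : ℕ) : ℝ) * q) :=
        Nat.log_choose_le_two_mul_sqrt _ q
    _ ≤ 2 * √(exp 1 * (L⁻¹ + K⁻¹) * K⁻¹ * (T * T)) := by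
        gcongr 2 * √?_
        calc exp 1 * ((⌊(T - q * K) / L⌋₊ + q : ℕ) : ℝ) * q
            ≤ exp 1 * (T * L⁻¹ + T * K⁻¹) * (T * K⁻¹) := by push_cast; gcongr
          _ = exp 1 * (L⁻¹ + K⁻¹) * K⁻¹ * (T * T) := by ring
    _ = 2 * T * √(exp 1 * (L⁻¹ + K⁻¹) * K⁻¹) := by
        rw [sqrt_mul (by positivity), sqrt_mul_self hT]; ring

theorem tendsto_limsup_of_nonneg_of_eventually_le {ι α : Type*} {l : Filter ι}
    {l' : Filter α} [l'.NeBot] {f : ι → α → ℝ} {g : ι → ℝ} (hf : ∀ i a, 0 ≤ f i a)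
    (hfg : ∀ i, ∀ᶠ a in l', f i a ≤ g i) (hg : Tendsto g l (nhds 0)) :
    Tendsto (fun i => limsup (f i) l') l (nhds 0) :=
  tendsto_of_tendsto_of_tendsto_of_le_of_le tendsto_const_nhds hg
    (fun i => le_limsup_of_frequently_le (.of_forall (hf i)) ⟨g i, hfg i⟩)
    (fun i => limsup_le_of_le (isCoboundedUnder_le_of_le l' (hf i)) (hfg i))

theorem stmt19_general (L : ℝ) (hL : 0 < L) (K T : ℕ → ℝ) (Q : ℕ → ℕ → ℕ)
    (hKpos : ∀ i, 0 < K i) (hK : Tendsto K atTop atTop)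
    (hTpos : ∀ j, 0 < T j) (hT : Tendsto T atTop atTop)
    (hQ : ∀ i j, 1 ≤ ⌊T j / K i⌋₊ →
      1 ≤ Q i j ∧ Q i j ≤ ⌊T j / K i⌋₊ ∧
      ∀ m : ℕ, 1 ≤ m → m ≤ ⌊T j / K i⌋₊ →
        Nat.choose (⌊(T j - (m : ℝ) * K i) / L⌋₊ + m) m ≤
          Nat.choose (⌊(T j - (Q i j : ℝ) * K i) / L⌋₊ + Q i j) (Q i j)) :
    Tendsto (fun i => Filter.limsup (fun j => (1 / T j) *
      Real.log (Nat.choose (⌊(T j - (Q i j : ℝ) * K i) / L⌋₊ + Q i j) (Q i j))) atTop)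
      atTop (nhds 0) := by
  have hKinv : Tendsto (fun i => (K i)⁻¹) atTop (nhds 0) := hK.inv_tendsto_atTop
  have hbound : Tendsto (fun i => 2 * √(exp 1 * (L⁻¹ + (K i)⁻¹) * (K i)⁻¹)) atTop
      (nhds 0) := by
    simpa using
      (((tendsto_const_nhds.add hKinv).const_mul (exp 1)).mul hKinv).sqrt.const_mul 2
  refine tendsto_limsup_of_nonneg_of_eventually_le
    (fun i j => mul_nonneg (by simpa using (hTpos j).le) (Real.log_natCast_nonneg _))
    (fun i => ?_) hbound
  filter_upwards [hT.eventually_ge_atTop (K i)] with j hTK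
  have hfloor : 1 ≤ ⌊T j / K i⌋₊ :=
    Nat.le_floor (by rwa [Nat.cast_one, le_div_iff₀ (hKpos i), one_mul])
  have hQT : (Q i j : ℝ) * K i ≤ T j := by
    rw [← le_div_iff₀ (hKpos i)]
    exact (Nat.cast_le.mpr (hQ i j hfloor).2.1).trans
      (Nat.floor_le (div_nonneg (hTpos j).le (hKpos i).le))
  rw [one_div_mul_eq_div, div_le_iff₀' (hTpos j)]
  linarith [log_choose_floor_add_le (hKpos i) hL hQT]

/-- Let `L > 0` and let `(K_i)`, `(T_j)` be increasing sequences of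
positive reals with `K_i → ∞` and `T_j → ∞`. For each `i` and each `j` with
`⌊T_j/K_i⌋ ≥ 1`, let `Q_{i,j} ∈ {1,…,⌊T_j/K_i⌋}` satisfy
`C(⌊(T_j − Q_{i,j}K_i)/L⌋ + Q_{i,j}, Q_{i,j}) ≥ C(⌊(T_j − mK_i)/L⌋ + m, m)` for all
`m ∈ {1,…,⌊T_j/K_i⌋}`. Then
`lim_{i→∞} limsup_{j→∞} (1/T_j)·log C(⌊(T_j − Q_{i,j}K_i)/L⌋ + Q_{i,j}, Q_{i,j}) = 0`. -/
theorem stmt19 (L : ℝ) (hL : 0 < L) (K T : ℕ → ℝ) (Q : ℕ → ℕ → ℕ)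
    (hKmono : StrictMono K) (hKpos : ∀ i, 0 < K i) (hK : Tendsto K atTop atTop)
    (hTmono : StrictMono T) (hTpos : ∀ j, 0 < T j) (hT : Tendsto T atTop atTop)
    (hQ : ∀ i j, 1 ≤ ⌊T j / K i⌋₊ →
      1 ≤ Q i j ∧ Q i j ≤ ⌊T j / K i⌋₊ ∧
      ∀ m : ℕ, 1 ≤ m → m ≤ ⌊T j / K i⌋₊ →
        Nat.choose (⌊(T j - (m : ℝ) * K i) / L⌋₊ + m) m ≤
          Nat.choose (⌊(T j - (Q i j : ℝ) * K i) / L⌋₊ + Q i j) (Q i j)) :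
    Tendsto (fun i => Filter.limsup (fun j => (1 / T j) *
      Real.log (Nat.choose (⌊(T j - (Q i j : ℝ) * K i) / L⌋₊ + Q i j) (Q i j))) atTop)
      atTop (nhds 0) :=
  stmt19_general L hL K T Q hKpos hK hTpos hT hQ
end
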